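/- For the cycle C_n on n vertices (n ≥ 3): IC(C_n) = n if n ≤ 6; IC(C_n) = 5 if n = 7; and IC(C_n) = 6 if n ≥ 8. -/

import Mathlib

namespace ICNL

variable {V : Type*}

/-- `S` is a dominating set of `G`. -/
def Dominating (G : SimpleGraph V) (S : Set V) : Prop :=
  ∀ v : V, v ∈ S ∨ ∃ u ∈ S, G.Adj u v

/-- `S` is an independent set of `G`. -/
def IndepSet (G : SimpleGraph V) (S : Set V) : Prop :=
  ∀ ⦃u : V⦄, u ∈ S → ∀ ⦃v : V⦄, v ∈ S → ¬ G.Adj u v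

/-- `S` is an independent dominating set of `G`. -/
def IndepDom (G : SimpleGraph V) (S : Set V) : Prop :=
  IndepSet G S ∧ Dominating G S

/-- `A` and `B` form an independent coalition in `G`. -/
def ICCoalition (G : SimpleGraph V) (A B : Set V) : Prop :=
  Disjoint A B ∧ IndepSet G A ∧ IndepSet G B ∧
    ¬ IndepDom G A ∧ ¬ IndepDom G B ∧ IndepDom G (A ∪ B)

/-- `π` is a partition of the vertex set into nonempty classes. -/
def IsPartition (π : Finset (Finset V)) : Prop :=
  (∀ A ∈ π, A.Nonempty) ∧ ∀ v : V, ∃! A : Finset V, A ∈ π ∧ v ∈ A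

/-- `π` is an independent coalition partition of `G`. -/
def IsICPartition (G : SimpleGraph V) (π : Finset (Finset V)) : Prop :=
  IsPartition π ∧
    ∀ A ∈ π, (∃ v : V, (A : Set V) = {v} ∧ Dominating G (A : Set V)) ∨
      (¬ IndepDom G (A : Set V) ∧
        ∃ B ∈ π, B ≠ A ∧ ICCoalition G (A : Set V) (B : Set V))

/-- The independent coalition number: the maximum number of classes of an
ic-partition of `G`. -/
noncomputable def IC (G : SimpleGraph V) : ℕ :=
  sSup {k | ∃ π : Finset (Finset V), IsICPartition G π ∧ π.card = k}

/-!
For `n ≥ 4` no vertex dominates `C_n`, so every class of an ic-partition has a coalition partner.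
A class `A` has at most two pairwise disjoint partners: pick a vertex `w` not dominated by `A`
next to a dominated vertex `u`; every partner dominates `w` without creating an edge inside the
coalition, hence contains `w` or the neighbour of `w` other than `u`. Thus the graph of coalitions
on the classes has maximum degree two and no isolated vertex, and seven classes would contain three
disjoint coalitions. These are independent dominating sets of size at least `n / 3` each, leaving
no vertex for a seventh class; on `C_7` the same count with two disjoint coalitions of size `3`
excludes six classes.

The partitions attaining the bounds are explicit colorings. For `n ≥ 8` they are `3`-periodic
after a short initial segment, so checking them on two cycle lengths per residue modulo `3` is
enough.
-/

open SimpleGraph Finset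

section Coalition

variable {G : SimpleGraph V} {A B : Set V}

theorem ICCoalition.symm (h : ICCoalition G A B) : ICCoalition G B A := by
  obtain ⟨hd, hA, hB, hnA, hnB, hU⟩ := h
  exact ⟨hd.symm, hB, hA, hnB, hnA, Set.union_comm A B ▸ hU⟩

theorem ICCoalition.not_dominating_left (h : ICCoalition G A B) : ¬ Dominating G A :=
  fun hA => h.2.2.2.1 ⟨h.2.1, hA⟩

theorem ICCoalition.dominating_union (h : ICCoalition G A B) : Dominating G (A ∪ B) :=
  h.2.2.2.2.2.2

theorem IndepSet.mono (h : IndepSet G B) (hAB : A ⊆ B) : IndepSet G A :=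
  fun _ hu _ hv => h (hAB hu) (hAB hv)

theorem not_dominating_of_indepSet_union (hind : IndepSet G (A ∪ B)) (hdisj : Disjoint A B)
    (hB : B.Nonempty) : ¬ Dominating G A := by
  obtain ⟨b, hb⟩ := hB
  intro hdom
  rcases hdom b with hbA | ⟨a, ha, hab⟩
  · exact Set.disjoint_left.1 hdisj hbA hb
  · exact hind (Or.inl ha) (Or.inr hb) hab

theorem ICCoalition.exists_mem_eq_or_adj (hB : ICCoalition G A B) {u w : V}
    (hu : u ∈ A ∨ ∃ a ∈ A, G.Adj a u) (hw : ¬ (w ∈ A ∨ ∃ a ∈ A, G.Adj a w))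
    (huw : G.Adj u w) : ∃ x ∈ B, x = w ∨ (G.Adj w x ∧ x ≠ u) := by
  obtain ⟨-, -, -, -, -, hind, hdom⟩ := hB
  rcases hdom w with (hwA | hwB) | ⟨x, hxA | hxB, hxw⟩
  · exact absurd (Or.inl hwA) hw
  · exact ⟨w, hwB, Or.inl rfl⟩
  · exact absurd (Or.inr ⟨x, hxA, hxw⟩) hw
  · refine ⟨x, hxB, Or.inr ⟨hxw.symm, ?_⟩⟩
    rintro rfl
    rcases hu with hxA | ⟨a, ha, hax⟩
    · exact hw (Or.inr ⟨x, hxA, hxw⟩)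
    · exact hind (Or.inl ha) (Or.inr hxB) hax

end Coalition

section Partition

variable {π : Finset (Finset V)}

theorem IsPartition.disjoint (hπ : IsPartition π) {A B : Finset V} (hA : A ∈ π) (hB : B ∈ π)
    (hAB : A ≠ B) : Disjoint A B := by
  rw [Finset.disjoint_left]
  intro v hvA hvB
  obtain ⟨C, -, huniq⟩ := hπ.2 v
  exact hAB ((huniq A ⟨hA, hvA⟩).trans (huniq B ⟨hB, hvB⟩).symm)

variable [Fintype V] [DecidableEq V]

theorem IsPartition.sum_card (hπ : IsPartition π) : ∑ A ∈ π, A.card = Fintype.card V := by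
  have hcover : π.biUnion id = univ := eq_univ_of_forall fun v => by
    obtain ⟨A, ⟨hA, hvA⟩, -⟩ := hπ.2 v
    exact mem_biUnion.2 ⟨A, hA, hvA⟩
  rw [← card_univ, ← hcover, card_biUnion (t := id) fun A hA B hB hAB => hπ.disjoint hA hB hAB]
  rfl

theorem IsPartition.card_le (hπ : IsPartition π) : π.card ≤ Fintype.card V :=
  hπ.sum_card ▸ by simpa using card_nsmul_le_sum π card 1 fun A hA => (hπ.1 A hA).card_pos

theorem IsPartition.sum_map_card_add_le (hπ : IsPartition π) {L : List π} (hL : L.Nodup) :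
    (L.map fun A : π => (A : Finset V).card).sum + (π.card - L.length) ≤ Fintype.card V := by
  have hrest : π.card - L.length ≤ ∑ A ∈ univ \ L.toFinset, (A : Finset V).card := by
    rw [← List.toFinset_card_of_nodup hL, ← Fintype.card_coe π, ← card_univ,
      ← card_sdiff_of_subset (subset_univ _)]
    simpa using card_nsmul_le_sum (univ \ L.toFinset) (fun A : π => (A : Finset V).card) 1
      fun A _ => (hπ.1 A A.2).card_pos
  have htotal : ∑ A : π, (A : Finset V).card = Fintype.card V := by
    rw [sum_coe_sort π Finset.card, hπ.sum_card]
  rw [← sum_sdiff (subset_univ L.toFinset), List.sum_toFinset _ hL] at htotal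
  omega

end Partition

theorem IC_eq {G : SimpleGraph V} {k : ℕ} (hex : ∃ π, IsICPartition G π ∧ π.card = k)
    (hle : ∀ π, IsICPartition G π → π.card ≤ k) : IC G = k :=
  IsGreatest.csSup_eq ⟨hex, by rintro _ ⟨π, hπ, rfl⟩; exact hle π hπ⟩

theorem eq_or_eq_or_eq_of_adj_of_degree_le_two {W : Type*} [DecidableEq W] {H : SimpleGraph W}
    {w a b c : W} [Fintype (H.neighborSet w)] (hw : H.degree w ≤ 2) (ha : H.Adj w a)
    (hb : H.Adj w b) (hc : H.Adj w c) : a = b ∨ a = c ∨ b = c := by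
  by_contra! h
  have hsub : ({a, b, c} : Finset W) ⊆ H.neighborFinset w := by
    intro x hx
    simp only [mem_insert, mem_singleton] at hx
    rcases hx with rfl | rfl | rfl <;> simpa
  have := card_le_card hsub
  rw [card_neighborFinset_eq_degree, card_eq_three.2 ⟨a, b, c, h.1, h.2.1, h.2.2, rfl⟩] at this
  omega

section MaxDegreeTwo

variable [Fintype V] [DecidableEq V] {G : SimpleGraph V} [DecidableRel G.Adj]

theorem card_le_three_mul_card_of_dominating (hdeg : ∀ v, G.degree v ≤ 2) {S : Finset V}
    (hS : Dominating G S) : Fintype.card V ≤ 3 * S.card :=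
  calc Fintype.card V = (univ : Finset V).card := card_univ.symm
    _ ≤ (S.biUnion fun s => insert s (G.neighborFinset s)).card := card_le_card fun v _ => by
        rcases hS v with hv | ⟨s, hs, hsv⟩
        · exact mem_biUnion.2 ⟨v, hv, mem_insert_self _ _⟩
        · exact mem_biUnion.2 ⟨s, hs, mem_insert_of_mem ((mem_neighborFinset _ _ _).2 hsv)⟩
    _ ≤ ∑ s ∈ S, (insert s (G.neighborFinset s)).card := card_biUnion_le
    _ ≤ ∑ _s ∈ S, 3 := sum_le_sum fun s _ => (card_insert_le _ _).trans <| by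
        rw [card_neighborFinset_eq_degree]; linarith [hdeg s]
    _ = 3 * S.card := by rw [sum_const, smul_eq_mul, mul_comm]

theorem not_dominating_singleton (hdeg : ∀ v, G.degree v ≤ 2) (hV : 4 ≤ Fintype.card V)
    (v : V) : ¬ Dominating G {v} := fun h => by
  have := card_le_three_mul_card_of_dominating hdeg (S := {v}) (by simpa using h)
  simp only [card_singleton] at this
  omega

theorem not_pairwise_disjoint_of_three_coalitions (hconn : G.Preconnected)
    (hdeg : ∀ v, G.degree v ≤ 2) {A B₁ B₂ B₃ : Set V} (hA : A.Nonempty)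
    (h₁ : ICCoalition G A B₁) (h₂ : ICCoalition G A B₂) (h₃ : ICCoalition G A B₃) :
    ¬ (Disjoint B₁ B₂ ∧ Disjoint B₁ B₃ ∧ Disjoint B₂ B₃) := by
  rintro ⟨h₁₂, h₁₃, h₂₃⟩
  obtain ⟨a, ha⟩ := hA
  set D := {v | v ∈ A ∨ ∃ a ∈ A, G.Adj a v}
  obtain ⟨w, hw⟩ : ∃ w, w ∉ D := by
    by_contra! hD
    exact h₁.not_dominating_left hD
  obtain ⟨⟨⟨u, w⟩, huw⟩, -, hu, hw⟩ := (hconn a w).some.exists_boundary_dart D (Or.inl ha) hw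
  obtain ⟨x₁, hx₁, e₁⟩ := h₁.exists_mem_eq_or_adj hu hw huw
  obtain ⟨x₂, hx₂, e₂⟩ := h₂.exists_mem_eq_or_adj hu hw huw
  obtain ⟨x₃, hx₃, e₃⟩ := h₃.exists_mem_eq_or_adj hu hw huw
  have ne₁₂ : x₁ ≠ x₂ := fun h => Set.disjoint_left.1 h₁₂ hx₁ (h ▸ hx₂)
  have ne₁₃ : x₁ ≠ x₃ := fun h => Set.disjoint_left.1 h₁₃ hx₁ (h ▸ hx₃)
  have ne₂₃ : x₂ ≠ x₃ := fun h => Set.disjoint_left.1 h₂₃ hx₂ (h ▸ hx₃)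
  have hother : ∀ y z, G.Adj w y ∧ y ≠ u → G.Adj w z ∧ z ≠ u → y = z := by
    intro y z hy hz
    rcases eq_or_eq_or_eq_of_adj_of_degree_le_two (hdeg w) huw.symm hy.1 hz.1 with h | h | h
    exacts [absurd h.symm hy.2, absurd h.symm hz.2, h]
  rcases e₁ with rfl | e₁ <;> rcases e₂ with rfl | e₂ <;> rcases e₃ with rfl | e₃
  all_goals first
    | exact ne₁₂ rfl | exact ne₁₃ rfl | exact ne₂₃ rfl
    | exact ne₂₃ (hother _ _ e₂ e₃) | exact ne₁₃ (hother _ _ e₁ e₃)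
    | exact ne₁₂ (hother _ _ e₁ e₂)

end MaxDegreeTwo

section Matching

variable {α : Type*} [Fintype α] [DecidableEq α] {H : SimpleGraph α} [DecidableRel H.Adj]

/-- A vertex of `S` with a neighbour in `S` has at most one neighbour outside `S`, so three
outside vertices without an outside neighbour have distinct neighbours in `S`. -/
theorem exists_adj_compl_or_exists_nodup (hdeg : ∀ a, H.degree a ≤ 2)
    (hnbr : ∀ a, ∃ b, H.Adj a b) {S : Finset α} (hS : ∀ s ∈ S, ∃ t ∈ S, H.Adj s t)
    (hcard : 2 < Sᶜ.card) :
    (∃ x y, x ∉ S ∧ y ∉ S ∧ H.Adj x y) ∨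
      ∃ x p y q z r, H.Adj x p ∧ H.Adj y q ∧ H.Adj z r ∧ p ∈ S ∧ q ∈ S ∧ r ∈ S ∧
        [x, p, y, q, z, r].Nodup := by
  by_cases hout : ∃ x y, x ∉ S ∧ y ∉ S ∧ H.Adj x y
  · exact Or.inl hout
  push Not at hout
  have hin : ∀ x ∉ S, ∃ p ∈ S, H.Adj x p := fun x hx => by
    obtain ⟨p, hp⟩ := hnbr x
    exact ⟨p, by_contra fun h => hout x p hx h hp, hp⟩
  have hone : ∀ s ∈ S, ∀ x y, x ∉ S → y ∉ S → H.Adj x s → H.Adj y s → x = y := by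
    intro s hs x y hx hy hxs hys
    obtain ⟨t, ht, hst⟩ := hS s hs
    rcases eq_or_eq_or_eq_of_adj_of_degree_le_two (hdeg s) hxs.symm hys.symm hst with h | h | h
    · exact h
    · exact absurd (h ▸ ht) hx
    · exact absurd (h ▸ ht) hy
  obtain ⟨x, y, z, hx, hy, hz, hxy, hxz, hyz⟩ := two_lt_card_iff.1 hcard
  rw [mem_compl] at hx hy hz
  obtain ⟨p, hp, hxp⟩ := hin x hx
  obtain ⟨q, hq, hyq⟩ := hin y hy
  obtain ⟨r, hr, hzr⟩ := hin z hz
  have hpq : p ≠ q := by rintro rfl; exact hxy (hone p hp x y hx hy hxp hyq)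
  have hpr : p ≠ r := by rintro rfl; exact hxz (hone p hp x z hx hz hxp hzr)
  have hqr : q ≠ r := by rintro rfl; exact hyz (hone q hq y z hy hz hyq hzr)
  refine Or.inr ⟨x, p, y, q, z, r, hxp, hyq, hzr, hp, hq, hr, ?_⟩
  simp only [List.nodup_cons, List.mem_cons, List.not_mem_nil, List.nodup_nil, or_false]
  grind

theorem exists_two_disjoint_adj (hdeg : ∀ a, H.degree a ≤ 2) (hnbr : ∀ a, ∃ b, H.Adj a b)
    (hα : 5 ≤ Fintype.card α) :
    ∃ a₁ b₁ a₂ b₂, H.Adj a₁ b₁ ∧ H.Adj a₂ b₂ ∧ [a₁, b₁, a₂, b₂].Nodup := by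
  obtain ⟨a₁⟩ : Nonempty α := Fintype.card_pos_iff.1 (by omega)
  obtain ⟨b₁, h₁⟩ := hnbr a₁
  have hS : ∀ s ∈ ({a₁, b₁} : Finset α), ∃ t ∈ ({a₁, b₁} : Finset α), H.Adj s t := by
    simp only [mem_insert, mem_singleton, forall_eq_or_imp, forall_eq, exists_eq_or_imp,
      exists_eq_left]
    exact ⟨Or.inr h₁, Or.inl h₁.symm⟩
  have hcard : 2 < ({a₁, b₁} : Finset α)ᶜ.card := by
    rw [card_compl, card_pair h₁.ne]; omega
  rcases exists_adj_compl_or_exists_nodup hdeg hnbr hS hcard with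
    ⟨x, y, hx, hy, hxy⟩ | ⟨x, p, y, q, z, r, -, -, -, hp, hq, hr, hnodup⟩
  · refine ⟨a₁, b₁, x, y, h₁, hxy, ?_⟩
    simp only [mem_insert, mem_singleton, not_or] at hx hy
    simp only [List.nodup_cons, List.mem_cons, List.not_mem_nil, List.nodup_nil, or_false]
    grind [h₁.ne, hxy.ne]
  · simp only [mem_insert, mem_singleton] at hp hq hr
    simp only [List.nodup_cons, List.mem_cons, List.not_mem_nil, List.nodup_nil, or_false]
      at hnodup
    grind

theorem exists_three_disjoint_adj (hdeg : ∀ a, H.degree a ≤ 2) (hnbr : ∀ a, ∃ b, H.Adj a b)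
    (hα : 7 ≤ Fintype.card α) :
    ∃ a₁ b₁ a₂ b₂ a₃ b₃, H.Adj a₁ b₁ ∧ H.Adj a₂ b₂ ∧ H.Adj a₃ b₃ ∧
      [a₁, b₁, a₂, b₂, a₃, b₃].Nodup := by
  obtain ⟨a₁, b₁, a₂, b₂, h₁, h₂, hnodup⟩ := exists_two_disjoint_adj hdeg hnbr (by omega)
  set S : Finset α := {a₁, b₁, a₂, b₂}
  have hS : ∀ s ∈ S, ∃ t ∈ S, H.Adj s t := by
    simp only [S, mem_insert, mem_singleton, forall_eq_or_imp, forall_eq, exists_eq_or_imp,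
      exists_eq_left]
    exact ⟨Or.inr (Or.inl h₁), Or.inl h₁.symm, Or.inr (Or.inr (Or.inr h₂)),
      Or.inr (Or.inr (Or.inl h₂.symm))⟩
  have hcard : 2 < Sᶜ.card := by
    have : S.card = 4 := by
      rw [show S = [a₁, b₁, a₂, b₂].toFinset by simp [S], List.toFinset_card_of_nodup hnodup]
      rfl
    rw [card_compl]; omega
  rcases exists_adj_compl_or_exists_nodup hdeg hnbr hS hcard with
    ⟨x, y, hx, hy, hxy⟩ | ⟨x, p, y, q, z, r, hxp, hyq, hzr, -, -, -, hnodup'⟩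
  · refine ⟨a₁, b₁, a₂, b₂, x, y, h₁, h₂, hxy, ?_⟩
    simp only [S, mem_insert, mem_singleton, not_or] at hx hy
    simp only [List.nodup_cons, List.mem_cons, List.not_mem_nil, List.nodup_nil, or_false]
      at hnodup ⊢
    grind [hxy.ne]
  · exact ⟨x, p, y, q, z, r, hxp, hyq, hzr, hnodup'⟩

end Matching

def coalitionGraph (G : SimpleGraph V) (π : Finset (Finset V)) : SimpleGraph π where
  Adj A B := A ≠ B ∧ ICCoalition G ((A : Finset V) : Set V) ((B : Finset V) : Set V)
  symm := ⟨fun _ _ h => ⟨h.1.symm, h.2.symm⟩⟩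
  loopless := ⟨fun _ h => h.1 rfl⟩

theorem coalitionGraph_adj {G : SimpleGraph V} {π : Finset (Finset V)} {A B : π} :
    (coalitionGraph G π).Adj A B ↔
      A ≠ B ∧ ICCoalition G ((A : Finset V) : Set V) ((B : Finset V) : Set V) :=
  Iff.rfl

theorem exists_coalitionGraph_adj {G : SimpleGraph V} {π : Finset (Finset V)}
    (hdom : ∀ v, ¬ Dominating G {v}) (hπ : IsICPartition G π)
    (A : π) : ∃ B, (coalitionGraph G π).Adj A B := by
  rcases hπ.2 A A.2 with ⟨v, hv, hAdom⟩ | ⟨-, B, hB, hBA, hAB⟩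
  · exact absurd (hv ▸ hAdom) (hdom v)
  · exact ⟨⟨B, hB⟩, coalitionGraph_adj.2 ⟨fun h => hBA (congrArg Subtype.val h).symm, hAB⟩⟩

section UpperBound

variable [Fintype V] [DecidableEq V] {G : SimpleGraph V} [DecidableRel G.Adj]
  {π : Finset (Finset V)}

theorem coalitionGraph_degree_le_two [DecidableRel (coalitionGraph G π).Adj]
    (hconn : G.Preconnected) (hdeg : ∀ v, G.degree v ≤ 2) (hπ : IsPartition π) (A : π) :
    (coalitionGraph G π).degree A ≤ 2 := by
  by_contra! h
  obtain ⟨B₁, hB₁, B₂, hB₂, B₃, hB₃, h₁₂, h₁₃, h₂₃⟩ := two_lt_card.1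
    (h.trans_eq (card_neighborFinset_eq_degree _ _).symm)
  simp only [mem_neighborFinset, coalitionGraph_adj] at hB₁ hB₂ hB₃
  have hdisj : ∀ {B C : π}, B ≠ C → Disjoint ((B : Finset V) : Set V) ((C : Finset V) : Set V) :=
    fun {B C} hBC => disjoint_coe.2 (hπ.disjoint B.2 C.2 (Subtype.coe_ne_coe.2 hBC))
  exact not_pairwise_disjoint_of_three_coalitions hconn hdeg
    (coe_nonempty.2 (hπ.1 A A.2)) hB₁.2 hB₂.2 hB₃.2 ⟨hdisj h₁₂, hdisj h₁₃, hdisj h₂₃⟩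

theorem card_le_three_mul_of_coalitionGraph_adj (hdeg : ∀ v, G.degree v ≤ 2) {A B : π}
    (h : (coalitionGraph G π).Adj A B) :
    Fintype.card V ≤ 3 * ((A : Finset V).card + (B : Finset V).card) := by
  have hdom : Dominating G ((A ∪ B : Finset V) : Set V) :=
    coe_union (A : Finset V) B ▸ (coalitionGraph_adj.1 h).2.dominating_union
  have := card_le_three_mul_card_of_dominating hdeg hdom
  have := card_union_le (A : Finset V) B
  omega

theorem card_le_six_of_isICPartition (hconn : G.Preconnected) (hdeg : ∀ v, G.degree v ≤ 2)
    (hV : 4 ≤ Fintype.card V) (hπ : IsICPartition G π) : π.card ≤ 6 := by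
  classical
  by_contra! h7
  obtain ⟨a₁, b₁, a₂, b₂, a₃, b₃, h₁, h₂, h₃, hL⟩ := exists_three_disjoint_adj
    (coalitionGraph_degree_le_two hconn hdeg hπ.1)
    (exists_coalitionGraph_adj (not_dominating_singleton hdeg hV) hπ)
    (by rw [Fintype.card_coe]; omega)
  have hsum := hπ.1.sum_map_card_add_le hL
  have := card_le_three_mul_of_coalitionGraph_adj hdeg h₁
  have := card_le_three_mul_of_coalitionGraph_adj hdeg h₂
  have := card_le_three_mul_of_coalitionGraph_adj hdeg h₃
  simp only [List.map_cons, List.map_nil, List.sum_cons, List.sum_nil, List.length_cons,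
    List.length_nil] at hsum
  omega

theorem card_le_five_of_isICPartition (hconn : G.Preconnected) (hdeg : ∀ v, G.degree v ≤ 2)
    (hV : Fintype.card V = 7) (hπ : IsICPartition G π) : π.card ≤ 5 := by
  classical
  by_contra! h6
  obtain ⟨a₁, b₁, a₂, b₂, h₁, h₂, hL⟩ := exists_two_disjoint_adj
    (coalitionGraph_degree_le_two hconn hdeg hπ.1)
    (exists_coalitionGraph_adj (not_dominating_singleton hdeg (by omega)) hπ)
    (by rw [Fintype.card_coe]; omega)
  have hsum := hπ.1.sum_map_card_add_le hL
  have := card_le_three_mul_of_coalitionGraph_adj hdeg h₁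
  have := card_le_three_mul_of_coalitionGraph_adj hdeg h₂
  simp only [List.map_cons, List.map_nil, List.sum_cons, List.sum_nil, List.length_cons,
    List.length_nil] at hsum
  omega

end UpperBound

theorem isICPartition_image_fiber [Fintype V] [DecidableEq V] {G : SimpleGraph V} {ι : Type*}
    [Fintype ι] [DecidableEq ι] {f : V → ι} (hf : Function.Surjective f) {p : ι → ι}
    (hp : ∀ i, p i ≠ i) (hcoal : ∀ i, IndepDom G (f ⁻¹' {i, p i})) :
    IsICPartition G (univ.image fun i => ({v | f v = i} : Finset V)) ∧
      (univ.image fun i => ({v | f v = i} : Finset V)).card = Fintype.card ι := by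
  set C : ι → Finset V := fun i => {v | f v = i}
  have hmemC : ∀ {i v}, v ∈ C i ↔ f v = i := by simp [C]
  have hC : ∀ i, (C i).Nonempty := fun i =>
    let ⟨v, hv⟩ := hf i
    ⟨v, hmemC.2 hv⟩
  have hinj : Function.Injective C := fun i j h => by
    obtain ⟨v, hv⟩ := hC i
    exact (hmemC.1 hv).symm.trans (hmemC.1 (h ▸ hv))
  have hdisj : ∀ {i j}, i ≠ j → Disjoint (C i : Set V) (C j) := fun hij =>
    disjoint_coe.2 <| disjoint_left.2 fun v hi hj => hij ((hmemC.1 hi).symm.trans (hmemC.1 hj))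
  have hunion : ∀ i, (C i : Set V) ∪ C (p i) = f ⁻¹' {i, p i} := fun i => by
    ext v; simp [hmemC]
  have hcoalC : ∀ i, ICCoalition G (C i) (C (p i)) := fun i => by
    have hind := hunion i ▸ (hcoal i).1
    refine ⟨hdisj (hp i).symm, hind.mono Set.subset_union_left,
      hind.mono Set.subset_union_right, fun h => ?_, fun h => ?_, hunion i ▸ hcoal i⟩
    · exact not_dominating_of_indepSet_union hind (hdisj (hp i).symm) (coe_nonempty.2 (hC _)) h.2
    · exact not_dominating_of_indepSet_union (Set.union_comm (C i : Set V) _ ▸ hind)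
        (hdisj (hp i)) (coe_nonempty.2 (hC _)) h.2
  refine ⟨⟨⟨?_, fun v => ⟨C (f v), ⟨mem_image_of_mem _ (mem_univ _), hmemC.2 rfl⟩, ?_⟩⟩, ?_⟩,
    by rw [card_image_of_injective _ hinj, card_univ]⟩
  · simp only [mem_image, mem_univ, true_and, forall_exists_index, forall_apply_eq_imp_iff]
    exact hC
  · rintro A ⟨hA, hvA⟩
    obtain ⟨i, -, rfl⟩ := mem_image.1 hA
    rw [hmemC.1 hvA]
  · simp only [mem_image, mem_univ, true_and, forall_exists_index, forall_apply_eq_imp_iff]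
    exact fun i => Or.inr ⟨fun h => (hcoalC i).not_dominating_left h.2, C (p i), ⟨p i, rfl⟩,
      fun h => hp i (hinj h), hcoalC i⟩

theorem isICPartition_image_singleton [Fintype V] [DecidableEq V] {G : SimpleGraph V}
    (h : ∀ v, Dominating G {v}) :
    IsICPartition G (univ.image singleton) ∧ (univ.image singleton : Finset (Finset V)).card =
      Fintype.card V := by
  refine ⟨⟨⟨?_, fun v => ⟨{v}, ⟨mem_image_of_mem _ (mem_univ _), mem_singleton_self v⟩, ?_⟩⟩, ?_⟩,
    by rw [card_image_of_injective _ singleton_injective, card_univ]⟩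
  · simp
  · rintro A ⟨hA, hvA⟩
    obtain ⟨w, -, rfl⟩ := mem_image.1 hA
    rw [mem_singleton.1 hvA]
  · simp only [mem_image, mem_univ, true_and, forall_exists_index, forall_apply_eq_imp_iff]
    exact fun v => Or.inl ⟨v, coe_singleton v, by simpa using h v⟩

/-- `{v | P v}` is an independent dominating set of `cycleGraph n` (`indepDom_cycleGraph`), stated
on values so that it is decidable. -/
def CycleIndepDom (n : ℕ) (P : ℕ → Prop) : Prop :=
  ∀ v < n, (P v → ¬ P ((v + 1) % n)) ∧ (P ((v + n - 1) % n) ∨ P v ∨ P ((v + 1) % n))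

instance {n : ℕ} {P : ℕ → Prop} [DecidablePred P] : Decidable (CycleIndepDom n P) := by
  unfold CycleIndepDom; infer_instance

theorem cycleGraph_adj_iff_val {n : ℕ} (hn : 2 ≤ n) {u v : Fin n} :
    (cycleGraph n).Adj u v ↔ (v : ℕ) = (u + 1) % n ∨ (u : ℕ) = (v + 1) % n := by
  obtain ⟨m, rfl⟩ : ∃ m, n = m + 2 := ⟨n - 2, by omega⟩
  rw [cycleGraph_adj, sub_eq_iff_eq_add, sub_eq_iff_eq_add, Fin.ext_iff, Fin.ext_iff, Fin.val_add,
    Fin.val_add, Fin.val_one, add_comm 1 (v : ℕ), add_comm 1 (u : ℕ)]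
  exact or_comm

theorem indepDom_cycleGraph {n : ℕ} (hn : 2 ≤ n) {P : ℕ → Prop} (h : CycleIndepDom n P) :
    IndepDom (cycleGraph n) {v | P v} := by
  refine ⟨fun u hu v hv huv => ?_, fun v => ?_⟩
  · rcases (cycleGraph_adj_iff_val hn).1 huv with e | e
    · exact (h u u.2).1 hu (e ▸ hv)
    · exact (h v v.2).1 hv (e ▸ hu)
  rcases (h v v.2).2 with hP | hP | hP
  · refine Or.inr ⟨⟨_, Nat.mod_lt _ (by omega)⟩, hP, (cycleGraph_adj_iff_val hn).2 (Or.inl ?_)⟩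
    rw [Nat.mod_add_mod, show (v : ℕ) + n - 1 + 1 = v + n by omega, Nat.add_mod_right,
      Nat.mod_eq_of_lt v.2]
  · exact Or.inl hP
  · exact Or.inr ⟨⟨_, Nat.mod_lt _ (by omega)⟩, hP, (cycleGraph_adj_iff_val hn).2 (Or.inr rfl)⟩

theorem add_one_mod_eq_ite {n v : ℕ} (hv : v < n) :
    (v + 1) % n = if v + 1 = n then 0 else v + 1 := by
  split_ifs with h
  · rw [h, Nat.mod_self]
  · exact Nat.mod_eq_of_lt (by omega)

theorem add_sub_one_mod_eq_ite {n v : ℕ} (hv : v < n) :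
    (v + n - 1) % n = if v = 0 then n - 1 else v - 1 := by
  split_ifs with h
  · subst h; rw [zero_add]; exact Nat.mod_eq_of_lt (by omega)
  · rw [show v + n - 1 = v - 1 + n by omega, Nat.add_mod_right, Nat.mod_eq_of_lt (by omega)]

/-- For `P` periodic beyond `k`, lengthening the cycle by one period only repeats neighbourhoods
that already occur, provided the cycle already contains two periods beyond `k`. -/
theorem CycleIndepDom.add_three {n k : ℕ} {P : ℕ → Prop} (hper : ∀ x ≥ k, P (x + 3) ↔ P x)
    (hn : k + 5 ≤ n) (h : CycleIndepDom n P) : CycleIndepDom (n + 3) P := by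
  have hP : ∀ a b, a = b ∨ (k ≤ b ∧ a = b + 3) → (P a ↔ P b) := by
    rintro a b (rfl | ⟨hb, rfl⟩)
    exacts [Iff.rfl, hper b hb]
  intro v hv
  obtain ⟨w, hw, hwv⟩ : ∃ w < n, w = if v + 1 < n then v else v - 3 :=
    ⟨_, by split_ifs <;> omega, rfl⟩
  rw [hP v w (by split_ifs at hwv <;> omega),
    hP ((v + 1) % (n + 3)) ((w + 1) % n) (by
      rw [add_one_mod_eq_ite hv, add_one_mod_eq_ite hw]; split_ifs at hwv ⊢ <;> omega),
    hP ((v + (n + 3) - 1) % (n + 3)) ((w + n - 1) % n) (by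
      rw [add_sub_one_mod_eq_ite hv, add_sub_one_mod_eq_ite hw]; split_ifs at hwv ⊢ <;> omega)]
  exact h w hw

theorem CycleIndepDom.of_periodic {N n k : ℕ} {P : ℕ → Prop} (hper : ∀ x ≥ k, P (x + 3) ↔ P x)
    (hN : k + 2 ≤ N) (h₀ : CycleIndepDom N P) (h₁ : CycleIndepDom (N + 3) P) (hn : N ≤ n)
    (hmod : n % 3 = N % 3) : CycleIndepDom n P := by
  have hstep : ∀ t, CycleIndepDom (N + 3 + 3 * t) P := by
    intro t
    induction t with
    | zero => exact h₁
    | succ t ih => simpa only [Nat.mul_succ, ← add_assoc] using ih.add_three hper (by omega)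
  rcases eq_or_lt_of_le hn with rfl | hlt
  · exact h₀
  · obtain ⟨t, rfl⟩ : ∃ t, n = N + 3 + 3 * t := ⟨(n - N - 3) / 3, by omega⟩
    exact hstep t

theorem exists_isICPartition_cycleGraph_of_coloring {n k : ℕ} (hn : 2 ≤ n) (c p : ℕ → ℕ)
    (hc : ∀ v < n, c v < k) (hsurj : ∀ j < k, ∃ v < n, c v = j)
    (hp : ∀ j < k, p j < k ∧ p j ≠ j)
    (hcoal : ∀ j < k, CycleIndepDom n fun x => c x = j ∨ c x = p j) :
    ∃ π, IsICPartition (cycleGraph n) π ∧ π.card = k := by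
  obtain ⟨hπ, hcard⟩ := isICPartition_image_fiber (G := cycleGraph n)
    (f := fun v : Fin n => (⟨c v, hc v v.2⟩ : Fin k)) (p := fun i => ⟨p i, (hp i i.2).1⟩)
    (fun i => let ⟨v, hv, hcv⟩ := hsurj i i.2; ⟨⟨v, hv⟩, Fin.ext hcv⟩)
    (fun i h => (hp i i.2).2 (congrArg Fin.val h))
    (fun i => by
      convert indepDom_cycleGraph hn (hcoal i i.2) using 2
      ext v; simp [Fin.ext_iff])
  exact ⟨_, hπ, hcard.trans (Fintype.card_fin k)⟩

def segmentColoring (seg : List ℕ) (v : ℕ) : ℕ :=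
  if v < seg.length then seg.getD v 0 else 3 + (v - seg.length) % 3

theorem segmentColoring_add_three {seg : List ℕ} {x : ℕ} (hx : seg.length ≤ x) :
    segmentColoring seg (x + 3) = segmentColoring seg x := by
  unfold segmentColoring
  rw [if_neg (by omega), if_neg (by omega)]
  omega

theorem segmentColoring_lt_six {seg : List ℕ} (hseg : ∀ j ∈ seg, j < 6) (v : ℕ) :
    segmentColoring seg v < 6 := by
  unfold segmentColoring
  split_ifs with hv
  · exact List.getD_eq_getElem _ _ hv ▸ hseg _ (List.getElem_mem hv)
  · omega

theorem exists_isICPartition_cycleGraph_segmentColoring {seg : List ℕ} {p : ℕ → ℕ} {N n : ℕ}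
    (hseg : ∀ j ∈ seg, j < 6) (hN : seg.length + 2 ≤ N)
    (hsurj : ∀ j < 6, ∃ v < N, segmentColoring seg v = j) (hp : ∀ j < 6, p j < 6 ∧ p j ≠ j)
    (hbase : ∀ j < 6,
      CycleIndepDom N (fun x => segmentColoring seg x = j ∨ segmentColoring seg x = p j) ∧
      CycleIndepDom (N + 3) (fun x => segmentColoring seg x = j ∨ segmentColoring seg x = p j))
    (hn : N ≤ n) (hmod : n % 3 = N % 3) :
    ∃ π, IsICPartition (cycleGraph n) π ∧ π.card = 6 :=
  exists_isICPartition_cycleGraph_of_coloring (by omega) (segmentColoring seg) p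
    (fun v _ => segmentColoring_lt_six hseg v)
    (fun j hj => let ⟨v, hv, hcv⟩ := hsurj j hj; ⟨v, by omega, hcv⟩) hp
    (fun j hj => (hbase j hj).1.of_periodic (fun x hx => by rw [segmentColoring_add_three hx]) hN
      (hbase j hj).2 hn hmod)

theorem cycleGraph_degree_le_two {n : ℕ} (hn : 2 ≤ n) (v : Fin n) :
    (cycleGraph n).degree v ≤ 2 := by
  obtain ⟨m, rfl⟩ : ∃ m, n = m + 2 := ⟨n - 2, by omega⟩
  rw [cycleGraph_degree_two_le]
  exact card_le_two

theorem exists_isICPartition_cycleGraph_three :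
    ∃ π, IsICPartition (cycleGraph 3) π ∧ π.card = 3 := by
  obtain ⟨hπ, hcard⟩ := isICPartition_image_singleton (G := cycleGraph 3) fun v u => by
    by_cases h : u = v
    · exact Or.inl h
    · exact Or.inr ⟨v, rfl, by rw [cycleGraph_three_eq_top]; exact Ne.symm h⟩
  exact ⟨_, hπ, hcard.trans (Fintype.card_fin 3)⟩

theorem exists_isICPartition_cycleGraph_card_eq_self {n : ℕ} (h4 : 4 ≤ n) (h6 : n ≤ 6) :
    ∃ π, IsICPartition (cycleGraph n) π ∧ π.card = n :=
  exists_isICPartition_cycleGraph_of_coloring (by omega) id (fun j => (j + n / 2) % n)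
    (fun _ hv => hv) (fun j hj => ⟨j, hj, rfl⟩) (by interval_cases n <;> decide)
    (by interval_cases n <;> decide)

/-- The partner map whose coalitions form the two paths `4 – 0 – 5` and `1 – 3 – 2`. -/
def pathsPartner (j : ℕ) : ℕ := [4, 3, 3, 1, 0, 0].getD j 0

theorem exists_isICPartition_cycleGraph_seven :
    ∃ π, IsICPartition (cycleGraph 7) π ∧ π.card = 5 :=
  exists_isICPartition_cycleGraph_of_coloring (by norm_num)
    (fun v => [0, 3, 4, 3, 4, 1, 2].getD v 0) pathsPartner (by decide) (by decide) (by decide) (by decide)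

theorem exists_isICPartition_cycleGraph_card_six {n : ℕ} (hn : 8 ≤ n) :
    ∃ π, IsICPartition (cycleGraph n) π ∧ π.card = 6 := by
  have := Nat.mod_lt n (by norm_num : 3 > 0)
  interval_cases h : n % 3
  · exact exists_isICPartition_cycleGraph_segmentColoring (seg := [0, 1, 2])
      (p := fun j => (j + 3) % 6) (N := 9)
      (by decide) (by decide) (by decide) (by decide) (by decide) (by omega) (by omega)
  · exact exists_isICPartition_cycleGraph_segmentColoring (seg := [0, 1, 2, 0, 3, 0])
      (p := pathsPartner) (N := 10)
      (by decide) (by decide) (by decide) (by decide) (by decide) (by omega) (by omega)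
  · exact exists_isICPartition_cycleGraph_segmentColoring (seg := [0, 1, 2, 0])
      (p := pathsPartner) (N := 8)
      (by decide) (by decide) (by decide) (by decide) (by decide) (by omega) (by omega)

theorem stmt_10 (n : ℕ) (hn : 3 ≤ n) :
    (n ≤ 6 → IC (SimpleGraph.cycleGraph n) = n) ∧
    (n = 7 → IC (SimpleGraph.cycleGraph n) = 5) ∧
    (8 ≤ n → IC (SimpleGraph.cycleGraph n) = 6) := by
  have hdeg := cycleGraph_degree_le_two (by omega : 2 ≤ n)
  refine ⟨fun h6 => IC_eq ?_ fun π hπ => by simpa using hπ.1.card_le, fun h7 => ?_, fun h8 => ?_⟩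
  · rcases (by omega : n = 3 ∨ 4 ≤ n) with rfl | h4
    · exact exists_isICPartition_cycleGraph_three
    · exact exists_isICPartition_cycleGraph_card_eq_self h4 h6
  · subst h7
    exact IC_eq exists_isICPartition_cycleGraph_seven fun π hπ =>
      card_le_five_of_isICPartition cycleGraph_preconnected hdeg (Fintype.card_fin 7) hπ
  · exact IC_eq (exists_isICPartition_cycleGraph_card_six h8) fun π hπ =>
      card_le_six_of_isICPartition cycleGraph_preconnected hdeg (by rw [Fintype.card_fin]; omega) hπ

end ICNL
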